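/- Let E be an interior edge shared by two triangles T₊, T₋ and let ω_E = T₊ ∪ T₋. Define the lifting L_E⁰(φ) ∈ P₀(T(E))², for φ ∈ L²(E)², as the unique piecewise-constant vector field on {T₊, T₋} with ∫_{ω_E} L_E⁰(φ)·τ̄ dx = ∫_E φ·{τ̄} ds for all piecewise-constant vector fields τ on {T₊, T₋}, where {τ} = ½(τ|_{T₊} + τ|_{T₋}). Then for T ∈ {T₊, T₋}, ‖L_E⁰(φ)‖_{0,T} ≤ C·h_E^{-1/2}·‖Π_E⁰ φ‖_{0,E}, where C = h_E·max{|T₊|^{-1/2}, |T₋|^{-1/2}} and Π_E⁰ is the L² projection onto constants on E. -/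

import Mathlib

/-! Testing the defining identity with τ = (c₊, 0) gives |T₊| ‖c₊‖² = ½ ⟪c₊, ∫_E φ⟫ = ½ h_E ⟪c₊, Π_E⁰φ⟫,
so Cauchy–Schwarz yields |T₊| ‖c₊‖ ≤ ½ h_E ‖Π_E⁰φ‖; dividing by |T₊|^{1/2} gives the bound on T₊, and
symmetrically on T₋. The factor h_E^{-1/2} in the claim cancels against ‖Π_E⁰φ‖_{0,E} = h_E^{1/2} ‖Π_E⁰φ‖. -/

open MeasureTheory Complex Finset
noncomputable section

abbrev E2 := EuclideanSpace ℝ (Fin 2)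
abbrev C2 := EuclideanSpace ℂ (Fin 2)

/-- complex ℓ²-pairing on ℂ², linear in the first and conjugate-linear in the second slot -/
def dot2 (a b : C2) : ℂ := ∑ i, a i * (starRingEnd ℂ) (b i)

lemma dot2_eq_inner (a b : C2) : dot2 a b = inner ℂ b a := by
  simp [dot2, PiLp.inner_apply, RCLike.inner_apply]

@[simp]
lemma dot2_zero_right (a : C2) : dot2 a 0 = 0 := by
  simp [dot2_eq_inner]

lemma dot2_self (a : C2) : dot2 a a = (‖a‖ : ℂ) ^ 2 := by
  rw [dot2_eq_inner]
  exact inner_self_eq_norm_sq_to_K a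

lemma norm_dot2_le (a b : C2) : ‖dot2 a b‖ ≤ ‖a‖ * ‖b‖ := by
  rw [dot2_eq_inner, mul_comm]
  exact norm_inner_le_norm b a

lemma integral_dot2 {α : Type*} [MeasurableSpace α] {μ : Measure α} {φ : α → C2}
    (hφ : Integrable φ μ) (τ : C2) : ∫ x, dot2 (φ x) τ ∂μ = dot2 (∫ x, φ x ∂μ) τ := by
  simp only [dot2_eq_inner]
  exact integral_inner hφ τ

lemma mul_norm_sq_le_of_dot2_eq {v : ℝ} {c a : C2}
    (h : (v : ℂ) * dot2 c c = dot2 a ((1 / 2 : ℂ) • c)) (hv : 0 ≤ v) :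
    v * ‖c‖ ^ 2 ≤ ‖a‖ / 2 * ‖c‖ :=
  calc v * ‖c‖ ^ 2 = ‖(v : ℂ) * dot2 c c‖ := by
        rw [dot2_self, norm_mul, norm_pow, norm_real, norm_real, Real.norm_of_nonneg hv, norm_norm]
    _ ≤ ‖a‖ * ‖(1 / 2 : ℂ) • c‖ := h ▸ norm_dot2_le _ _
    _ = ‖a‖ / 2 * ‖c‖ := by rw [norm_smul]; norm_num; ring

lemma sqrt_mul_le_rpow_neg_half_mul {v x a : ℝ} (hv : 0 ≤ v) (hx : 0 ≤ x) (ha : 0 ≤ a)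
    (h : v * x ^ 2 ≤ a * x) : √v * x ≤ v ^ (-(1:ℝ)/2) * a := by
  -- for `v = 0` both sides vanish, since `(0 : ℝ) ^ (-1/2) = 0` in Mathlib
  rcases hv.eq_or_lt with rfl | hv
  · simp
  rcases hx.eq_or_lt with rfl | hx
  · rw [mul_zero]; positivity
  have hvx : v * x ≤ a := le_of_mul_le_mul_right (by nlinarith) hx
  have hsqrt : √v = v * v ^ (-(1:ℝ)/2) := by
    rw [Real.sqrt_eq_rpow, ← Real.rpow_one_add' hv.le] <;> norm_num
  rw [hsqrt]
  nlinarith [Real.rpow_pos_of_pos hv (-(1:ℝ)/2)]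

lemma rpow_neg_half_mul_sqrt {x : ℝ} (hx : 0 < x) : x ^ (-(1:ℝ)/2) * √x = 1 := by
  rw [Real.sqrt_eq_rpow, ← Real.rpow_add hx]; norm_num

lemma sqrt_mul_norm_le_of_lifting {α : Type*} [MeasurableSpace α] {μ : Measure α} {φ : α → C2}
    (hφ : Integrable φ μ) {v : ℝ} (hv : 0 ≤ v) {c : C2}
    (h : (v : ℂ) * dot2 c c = ∫ x, dot2 (φ x) ((1 / 2 : ℂ) • c) ∂μ) :
    √v * ‖c‖ ≤ v ^ (-(1:ℝ)/2) * (‖∫ x, φ x ∂μ‖ / 2) := by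
  rw [integral_dot2 hφ] at h
  exact sqrt_mul_le_rpow_neg_half_mul hv (norm_nonneg c) (by positivity)
    (mul_norm_sq_le_of_dot2_eq h hv)

theorem lifting_L0_stability_general
    (A B P : E2)
    (hP : AffineIndependent ℝ ![A, B, P])
    -- the two triangles T₊, T₋ sharing the edge E = [A,B]
    (Tp Tm : Set E2)
    (νE : Measure E2)
    (hE : ℝ) (hhE : hE = dist A B)
    (volTp volTm : ℝ) (hvolp : volTp = (volume Tp).toReal) (hvolm : volTm = (volume Tm).toReal)
    -- jump data φ ∈ L²(E)²
    (φ : E2 → C2) (hφi : Integrable φ νE)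
    -- the piecewise-constant lifting L_E⁰(φ), with values cp on T₊ and cm on T₋
    (cp cm : C2)
    -- defining property: ∫_{ω_E} L_E⁰(φ)·τ̄ dx = ∫_E φ·{τ̄} ds for all piecewise
    -- constants τ (with value τp on T₊ and τm on T₋), {τ} = ½(τ|_{T₊} + τ|_{T₋})
    (hdef : ∀ τp τm : C2,
      (volTp : ℂ) * dot2 cp τp + (volTm : ℂ) * dot2 cm τm =
        ∫ x, dot2 (φ x) ((1/2 : ℂ) • (τp + τm)) ∂νE)
    -- Π_E⁰ φ : the mean value of φ on E
    (Piφ : C2) (hPiφ : Piφ = (hE : ℝ)⁻¹ • ∫ x, φ x ∂νE)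
    (C : ℝ) (hC : C = hE * max (volTp ^ (-(1:ℝ)/2)) (volTm ^ (-(1:ℝ)/2))) :
    -- ‖L_E⁰(φ)‖_{0,T} ≤ C·h_E^{-1/2}·‖Π_E⁰φ‖_{0,E} for T = T₊ and T = T₋
    Real.sqrt volTp * ‖cp‖ ≤ C * hE ^ (-(1:ℝ)/2) * (Real.sqrt hE * ‖Piφ‖) ∧
      Real.sqrt volTm * ‖cm‖ ≤ C * hE ^ (-(1:ℝ)/2) * (Real.sqrt hE * ‖Piφ‖) := by
  have hE_pos : 0 < hE :=
    hhE ▸ dist_pos.2 (by simpa using hP.injective.ne (show (0 : Fin 3) ≠ 1 by decide))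
  have hnorm : ‖∫ x, φ x ∂νE‖ = hE * ‖Piφ‖ := by
    rw [hPiφ, norm_smul, norm_inv, Real.norm_of_nonneg hE_pos.le, mul_inv_cancel_left₀ hE_pos.ne']
  have hrhs : C * hE ^ (-(1:ℝ)/2) * (Real.sqrt hE * ‖Piφ‖) = C * ‖Piφ‖ := by
    rw [← mul_assoc, mul_assoc C, rpow_neg_half_mul_sqrt hE_pos, mul_one]
  have bound : ∀ v c, 0 ≤ v → v ^ (-(1:ℝ)/2) ≤ max (volTp ^ (-(1:ℝ)/2)) (volTm ^ (-(1:ℝ)/2)) →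
      (v : ℂ) * dot2 c c = ∫ x, dot2 (φ x) ((1 / 2 : ℂ) • c) ∂νE → √v * ‖c‖ ≤ C * ‖Piφ‖ := by
    intro v c hv hmax h
    calc √v * ‖c‖ ≤ v ^ (-(1:ℝ)/2) * (hE * ‖Piφ‖ / 2) := hnorm ▸ sqrt_mul_norm_le_of_lifting hφi hv h
      _ ≤ C * ‖Piφ‖ := by
        rw [hC]
        nlinarith [Real.rpow_nonneg hv (-(1:ℝ)/2), mul_nonneg hE_pos.le (norm_nonneg Piφ)]
  rw [hrhs]
  constructor
  · refine bound volTp cp (hvolp ▸ ENNReal.toReal_nonneg) (le_max_left _ _) ?_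
    simpa using hdef cp 0
  · refine bound volTm cm (hvolm ▸ ENNReal.toReal_nonneg) (le_max_right _ _) ?_
    simpa using hdef 0 cm

theorem lifting_L0_stability
    (A B P Q : E2)
    (hP : AffineIndependent ℝ ![A, B, P]) (hQ : AffineIndependent ℝ ![A, B, Q])
    -- the two triangles T₊, T₋ sharing the edge E = [A,B]
    (Tp Tm : Set E2) (hTp : Tp = convexHull ℝ {A, B, P}) (hTm : Tm = convexHull ℝ {A, B, Q})
    (Eset : Set E2) (hEset : Eset = segment ℝ A B)
    (νE : Measure E2) (hνE : νE = (μH[1]).restrict Eset)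
    (hE : ℝ) (hhE : hE = dist A B)
    (volTp volTm : ℝ) (hvolp : volTp = (volume Tp).toReal) (hvolm : volTm = (volume Tm).toReal)
    -- jump data φ ∈ L²(E)²
    (φ : E2 → C2) (hφ : Integrable (fun x => ‖φ x‖ ^ 2) νE) (hφi : Integrable φ νE)
    -- the piecewise-constant lifting L_E⁰(φ), with values cp on T₊ and cm on T₋
    (cp cm : C2)
    -- defining property: ∫_{ω_E} L_E⁰(φ)·τ̄ dx = ∫_E φ·{τ̄} ds for all piecewise
    -- constants τ (with value τp on T₊ and τm on T₋), {τ} = ½(τ|_{T₊} + τ|_{T₋})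
    (hdef : ∀ τp τm : C2,
      (volTp : ℂ) * dot2 cp τp + (volTm : ℂ) * dot2 cm τm =
        ∫ x, dot2 (φ x) ((1/2 : ℂ) • (τp + τm)) ∂νE)
    -- Π_E⁰ φ : the mean value of φ on E
    (Piφ : C2) (hPiφ : Piφ = (hE : ℝ)⁻¹ • ∫ x, φ x ∂νE)
    (C : ℝ) (hC : C = hE * max (volTp ^ (-(1:ℝ)/2)) (volTm ^ (-(1:ℝ)/2))) :
    -- ‖L_E⁰(φ)‖_{0,T} ≤ C·h_E^{-1/2}·‖Π_E⁰φ‖_{0,E} for T = T₊ and T = T₋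
    Real.sqrt volTp * ‖cp‖ ≤ C * hE ^ (-(1:ℝ)/2) * (Real.sqrt hE * ‖Piφ‖) ∧
      Real.sqrt volTm * ‖cm‖ ≤ C * hE ^ (-(1:ℝ)/2) * (Real.sqrt hE * ‖Piφ‖) :=
  lifting_L0_stability_general A B P hP Tp Tm νE hE hhE volTp volTm hvolp hvolm φ hφi cp cm hdef Piφ
    hPiφ C hC
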